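/- arXiv:2504.07572 — 3 statements merged into one kernel-verified Lean document; each statement's English description precedes it below -/
import Mathlib

section
/- Let p be a prime, let x ∈ ℤ_p, and let d : ℕ → ℕ be the digit sequence of x, i.e. d(i) < p for all i and x = ∑_{i=0}^∞ d(i)·pⁱ in ℤ_p. Then d is eventually periodic (there exist k ≥ 0 and T ≥ 1 such that d(i + T) = d(i) for all i ≥ k) if and only if x is rational, i.e. there exists q ∈ ℚ whose image in the p-adic numbers equals x. -/
open Finset

/-- For a prime `p`, a `p`-adic integer `x` with digit sequence `d` (so `d i < p` and
`x = ∑ d(i)·pⁱ` in `ℤ_p`): `d` is eventually periodic if and only if `x` is rational,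
i.e. `x` is the image of some `q ∈ ℚ` in the `p`-adic numbers. -/
theorem padic_rational_iff_eventually_periodic_digits (p : ℕ) [Fact p.Prime]
    (x : ℤ_[p]) (d : ℕ → ℕ) (hd : ∀ i, d i < p)
    (hsum : HasSum (fun i => (d i : ℤ_[p]) * (p : ℤ_[p]) ^ i) x) :
    (∃ (k T : ℕ), 1 ≤ T ∧ ∀ i, k ≤ i → d (i + T) = d i) ↔
      (∃ q : ℚ, (q : ℚ_[p]) = (x : ℚ_[p])) := by
  have hp2 : 2 ≤ p := (Fact.out (p := p.Prime)).two_le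
  have hp0 : (p : ℚ_[p]) ≠ 0 := Nat.cast_ne_zero.mpr (by omega)
  set X : ℚ_[p] := (x : ℚ_[p]) with hX
  have hsumQ : HasSum (fun i => (d i : ℚ_[p]) * (p : ℚ_[p]) ^ i) X := by
    have h := hsum.map (PadicInt.Coe.ringHom : ℤ_[p] →+* ℚ_[p]) continuous_subtype_val
    rw [hX]
    simp only [PadicInt.Coe.ringHom, Function.comp_def, map_mul, map_pow, map_natCast] at h
    exact h
  set S : ℕ → ℚ_[p] := fun n =>
    ((p : ℚ_[p]) ^ n)⁻¹ * (X - ∑ i ∈ range n, (d i : ℚ_[p]) * (p : ℚ_[p]) ^ i) with hSdef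
  have hS : ∀ n, HasSum (fun j => (d (n + j) : ℚ_[p]) * (p : ℚ_[p]) ^ j) (S n) := by
    intro n
    have h1 := (hasSum_nat_add_iff' n).mpr hsumQ
    have h2 := h1.mul_left ((p : ℚ_[p]) ^ n)⁻¹
    have he : (fun j => ((p : ℚ_[p]) ^ n)⁻¹ * ((d (j + n) : ℚ_[p]) * (p : ℚ_[p]) ^ (j + n)))
        = fun j => (d (n + j) : ℚ_[p]) * (p : ℚ_[p]) ^ j := by
      funext j
      rw [add_comm j n, pow_add]
      field_simp
    rwa [he] at h2
  have hrec : ∀ n, S n = (d n : ℚ_[p]) + p * S (n + 1) := by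
    intro n
    simp only [hSdef, sum_range_succ]
    field_simp
    ring
  have hSnorm : ∀ n, ‖S n‖ ≤ 1 := by
    intro n
    have hpart : ∀ M, ‖∑ j ∈ range M, (d (n + j) : ℚ_[p]) * (p : ℚ_[p]) ^ j‖ ≤ 1 := by
      intro M
      have : (∑ j ∈ range M, (d (n + j) : ℚ_[p]) * (p : ℚ_[p]) ^ j)
          = (((∑ j ∈ range M, d (n + j) * p ^ j : ℕ) : ℤ) : ℚ_[p]) := by push_cast; ring
      rw [this]
      exact Padic.norm_int_le_one _
    have ht := (hS n).tendsto_sum_nat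
    exact le_of_tendsto' ht.norm fun M => hpart M
  constructor
  · rintro ⟨k, T, hT, hper⟩
    -- forward: periodic digits → rational
    have hA : ((∑ j ∈ range T, d (k + j) * p ^ j : ℕ) : ℚ_[p])
        = ∑ j ∈ range T, (d (k + j) : ℚ_[p]) * (p : ℚ_[p]) ^ j := by push_cast; ring
    have hgeom : S k - ((∑ j ∈ range T, d (k + j) * p ^ j : ℕ) : ℚ_[p]) = (p : ℚ_[p]) ^ T * S k := by
      have h1 := (hasSum_nat_add_iff' T).mpr (hS k)
      have he : (fun j => (d (k + (j + T)) : ℚ_[p]) * (p : ℚ_[p]) ^ (j + T))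
          = fun j => (p : ℚ_[p]) ^ T * ((d (k + j) : ℚ_[p]) * (p : ℚ_[p]) ^ j) := by
        funext j
        have : k + (j + T) = (k + j) + T := by ring
        rw [this, hper (k + j) (by omega), pow_add]
        ring
      rw [he] at h1
      have h2 := (hS k).mul_left ((p : ℚ_[p]) ^ T)
      rw [hA]
      exact h1.unique h2
    have hne : (1 : ℚ_[p]) - (p : ℚ_[p]) ^ T ≠ 0 := by
      intro h
      have h1 : (p : ℚ_[p]) ^ T = 1 := by linear_combination -h
      have h2 : ‖(p : ℚ_[p]) ^ T‖ < 1 := by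
        rw [norm_pow, Padic.norm_p]
        refine pow_lt_one₀ (by positivity) ?_ (by omega)
        rw [inv_lt_one_iff₀]
        right
        exact_mod_cast by omega
      rw [h1, norm_one] at h2
      exact lt_irrefl 1 h2
    have hXk : X = ((∑ i ∈ range k, d i * p ^ i : ℕ) : ℚ_[p]) + (p : ℚ_[p]) ^ k * S k := by
      have hB : ((∑ i ∈ range k, d i * p ^ i : ℕ) : ℚ_[p])
          = ∑ i ∈ range k, (d i : ℚ_[p]) * (p : ℚ_[p]) ^ i := by push_cast; ring
      rw [hB, hSdef]
      field_simp
      ring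
    have hneQ : (1 : ℚ) - (p : ℚ) ^ T ≠ 0 := by
      have : (1:ℚ) < (p:ℚ) ^ T := by
        refine one_lt_pow₀ ?_ (by omega)
        exact_mod_cast by omega
      linarith
    refine ⟨(∑ i ∈ range k, d i * p ^ i : ℕ) + (p:ℚ) ^ k *
      (∑ j ∈ range T, d (k + j) * p ^ j : ℕ) / (1 - (p:ℚ) ^ T), ?_⟩
    push_cast
    rw [hXk]
    have hSk : S k = ((∑ j ∈ range T, d (k + j) * p ^ j : ℕ) : ℚ_[p]) / (1 - (p : ℚ_[p]) ^ T) := by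
      rw [eq_div_iff hne]
      linear_combination hgeom
    rw [hSk]
    push_cast
    ring
  · rintro ⟨q, hq⟩
    -- X = q is rational; write q = a / b with p ∤ b
    set a : ℤ := q.num with ha
    set b : ℤ := (q.den : ℤ) with hbdef
    have hb0 : b ≠ 0 := Int.natCast_ne_zero.mpr q.den_nz
    have hXnorm : ‖X‖ ≤ 1 := by
      rw [hX, PadicInt.padic_norm_e_of_padicInt]
      exact PadicInt.norm_le_one x
    have hbp : ¬ ((p : ℤ) ∣ b) := by
      intro hdvd
      have hden : ‖(b : ℚ_[p])‖ < 1 := (Padic.norm_intCast_lt_one_iff (k := b)).mpr hdvd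
      have hnum : ¬ ((p : ℤ) ∣ a) := by
        intro hna
        have hcop := q.reduced
        have h1 : p ∣ a.natAbs := Int.natCast_dvd_natCast.mp (by
          simpa using (Int.dvd_natAbs.mpr hna))
        have h2 : p ∣ q.den := by
          have h := hdvd
          rw [hbdef] at h
          exact_mod_cast h
        have := Nat.eq_one_of_dvd_one (hcop ▸ Nat.dvd_gcd h1 h2)
        omega
      have hanorm : ‖(a : ℚ_[p])‖ = 1 :=
        le_antisymm (Padic.norm_int_le_one a)
          (not_lt.mp (fun h => hnum ((Padic.norm_intCast_lt_one_iff (k := a)).mp h)))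
      have hqa : (q : ℚ_[p]) = (a : ℚ_[p]) / (b : ℚ_[p]) := by
        rw [ha, hbdef]
        rw [Rat.cast_def]
        norm_cast
      have hbnorm0 : (0:ℝ) < ‖(b : ℚ_[p])‖ := by
        rw [norm_pos_iff]
        exact_mod_cast hb0
      have : (1:ℝ) < ‖(q : ℚ_[p])‖ := by
        rw [hqa, norm_div, hanorm]
        rw [lt_div_iff₀ hbnorm0]
        simpa using hden
      rw [hq] at this
      linarith
    have hbQ : ((b : ℚ_[p])) ≠ 0 := by exact_mod_cast hb0
    have hXab : (b : ℚ_[p]) * X = (a : ℚ_[p]) := by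
      rw [← hq, ha, hbdef, Rat.cast_def]
      field_simp
      push_cast
      ring
    -- integer numerators of the tails, with a uniform bound
    set C : ℤ := max |a| |b| with hC
    have hex : ∀ n, ∃ an : ℤ, ((an : ℚ_[p]) = (b : ℚ_[p]) * S n ∧ |an| ≤ C) := by
      intro n
      induction n with
      | zero =>
        refine ⟨a, ?_, le_max_left _ _⟩
        rw [← hXab, hSdef]
        simp
      | succ n ih =>
        obtain ⟨an, h1, h2⟩ := ih
        have hrel : ((an - (d n : ℤ) * b : ℤ) : ℚ_[p]) = (p : ℚ_[p]) * ((b : ℚ_[p]) * S (n + 1)) := by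
          push_cast
          rw [h1]
          linear_combination (b : ℚ_[p]) * hrec n
        have hdvd : (p : ℤ) ∣ (an - (d n : ℤ) * b) := by
          rw [← Padic.norm_intCast_lt_one_iff]
          rw [hrel, norm_mul, Padic.norm_p]
          calc ((p:ℝ))⁻¹ * ‖(b : ℚ_[p]) * S (n+1)‖
              ≤ ((p:ℝ))⁻¹ * 1 := by
                refine mul_le_mul_of_nonneg_left ?_ (by positivity)
                rw [norm_mul]
                calc ‖(b : ℚ_[p])‖ * ‖S (n+1)‖ ≤ 1 * 1 :=
                      mul_le_mul (Padic.norm_int_le_one b) (hSnorm (n+1))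
                        (norm_nonneg _) zero_le_one
                  _ = 1 := by ring
            _ < 1 := by
                rw [mul_one, inv_lt_one_iff₀]
                right
                exact_mod_cast by omega
        obtain ⟨c, hc⟩ := hdvd
        refine ⟨c, ?_, ?_⟩
        · have hcast : (p : ℚ_[p]) * (c : ℚ_[p]) = (p : ℚ_[p]) * ((b : ℚ_[p]) * S (n + 1)) := by
            rw [← hrel, hc]; push_cast; ring
          exact mul_left_cancel₀ hp0 hcast
        · have hdn : (d n : ℤ) ≤ (p : ℤ) - 1 := by
            have h := hd n; omega
          have habs : |an - (d n : ℤ) * b| ≤ C + ((p:ℤ) - 1) * C := by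
            calc |an - (d n : ℤ) * b| ≤ |an| + |(d n : ℤ) * b| := abs_sub _ _
              _ ≤ C + ((p:ℤ) - 1) * C := by
                  refine add_le_add h2 ?_
                  rw [abs_mul]
                  have h3 : |(d n : ℤ)| ≤ (p:ℤ) - 1 := by
                    rw [abs_of_nonneg (by positivity)]; exact hdn
                  have h4 : |b| ≤ C := le_max_right _ _
                  have h5 : (0:ℤ) ≤ |b| := abs_nonneg _
                  nlinarith [abs_nonneg ((d n : ℤ))]
          have hpc : (p : ℤ) * |c| ≤ (p : ℤ) * C := by
            have : |an - (d n : ℤ) * b| = (p : ℤ) * |c| := by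
              rw [hc, abs_mul, abs_of_nonneg (by positivity : (0:ℤ) ≤ (p:ℤ))]
            rw [this] at habs
            linarith
          have hppos : (0:ℤ) < (p:ℤ) := by exact_mod_cast by omega
          exact le_of_mul_le_mul_left hpc hppos
    choose A hA1 hA2 using hex
    -- pigeonhole
    have hfin : (Set.Icc (-C) C).Finite := Set.finite_Icc _ _
    have hmaps : Set.MapsTo A Set.univ (Set.Icc (-C) C) := by
      intro n _
      exact Set.mem_Icc.mpr (abs_le.mp (hA2 n))
    obtain ⟨m, -, n, -, hmn, heq⟩ :=
      Set.infinite_univ.exists_ne_map_eq_of_mapsTo hmaps hfin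
    -- wlog m < n
    obtain ⟨m, n, hlt, heq⟩ : ∃ m n, m < n ∧ A m = A n := by
      rcases lt_or_gt_of_ne hmn with h | h
      · exact ⟨m, n, h, heq⟩
      · exact ⟨n, m, h, heq.symm⟩
    have hSmn : S m = S n := by
      have : (b : ℚ_[p]) * S m = (b : ℚ_[p]) * S n := by
        rw [← hA1 m, ← hA1 n, heq]
      exact mul_left_cancel₀ hbQ this
    -- a single step: equal tails have equal digits and equal next tails
    have hstep : ∀ i j, S i = S j → d i = d j ∧ S (i + 1) = S (j + 1) := by
      intro i j h
      have h2 : (((d i : ℤ) - (d j : ℤ) : ℤ) : ℚ_[p]) = (p : ℚ_[p]) * (S (j + 1) - S (i + 1)) := by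
        push_cast
        linear_combination h - hrec i + hrec j
      have hnorm : ‖(((d i : ℤ) - (d j : ℤ) : ℤ) : ℚ_[p])‖ < 1 := by
        rw [h2, norm_mul, Padic.norm_p]
        have hsub : ‖S (j + 1) - S (i + 1)‖ ≤ 1 := by
          rw [sub_eq_add_neg]
          refine le_trans (Padic.nonarchimedean _ _) ?_
          rw [norm_neg]
          exact max_le (hSnorm _) (hSnorm _)
        calc ((p:ℝ))⁻¹ * ‖S (j+1) - S (i+1)‖ ≤ ((p:ℝ))⁻¹ * 1 :=
              mul_le_mul_of_nonneg_left hsub (by positivity)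
          _ < 1 := by
              rw [mul_one, inv_lt_one_iff₀]
              right
              exact_mod_cast by omega
      have hdvd := Padic.norm_intCast_lt_one_iff.mp hnorm
      have hdij : (d i : ℤ) - (d j : ℤ) = 0 := by
        refine Int.eq_zero_of_abs_lt_dvd hdvd ?_
        have h1 := hd i
        have h2' := hd j
        rw [abs_lt]
        omega
      have hdd : d i = d j := by omega
      refine ⟨hdd, ?_⟩
      have : (p : ℚ_[p]) * S (i + 1) = (p : ℚ_[p]) * S (j + 1) := by
        have hi := hrec i
        have hj := hrec j
        rw [hdd] at hi
        linear_combination h - hi + hj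
      exact mul_left_cancel₀ hp0 this
    -- propagate periodicity
    have hper : ∀ j, S (m + j) = S (n + j) := by
      intro j
      induction j with
      | zero => exact hSmn
      | succ j ih => exact (hstep (m + j) (n + j) ih).2
    refine ⟨m, n - m, by omega, fun i hi => ?_⟩
    have h1 := (hstep (m + (i - m)) (n + (i - m)) (hper (i - m))).1
    have e1 : m + (i - m) = i := by omega
    have e2 : n + (i - m) = i + (n - m) := by omega
    rw [e1, e2] at h1
    exact h1.symm
end

section
/- For every b > 0 there exists A ∈ ℝ such that for every a > A the Hénon map H_{a,b} has infinitely many periodic points in ℝ². In particular, the set of parameters (a, b) ∈ ℝ² with b > 0 for which H_{a,b} has infinitely many periodic points contains a nonempty open subset of the (a, b)-plane. -/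
open Real
open scoped NNReal

/-- The Hénon map `H_{a,b}(x, y) = (a − x² − b·y, x)`. -/
def henon (a b : ℝ) : ℝ × ℝ → ℝ × ℝ := fun p => (a - p.1 ^ 2 - b * p.2, p.1)

namespace HenonAux

noncomputable def clamp (R t : ℝ) : ℝ := max (-R) (min R t)

lemma neg_le_clamp (R t : ℝ) : -R ≤ clamp R t := le_max_left _ _

lemma clamp_le {R : ℝ} (hR : 0 ≤ R) (t : ℝ) : clamp R t ≤ R :=
  max_le (by linarith) (min_le_left _ _)

lemma abs_clamp_le {R : ℝ} (hR : 0 ≤ R) (t : ℝ) : |clamp R t| ≤ R :=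
  abs_le.2 ⟨neg_le_clamp R t, clamp_le hR t⟩

lemma clamp_eq {R t : ℝ} (h : |t| ≤ R) : clamp R t = t := by
  rw [abs_le] at h
  rw [clamp, min_eq_right h.2, max_eq_right h.1]

lemma abs_clamp_sub_clamp (R t u : ℝ) : |clamp R t - clamp R u| ≤ |t - u| := by
  have h1 : |clamp R t - clamp R u| ≤ max |(-R) - (-R)| |min R t - min R u| :=
    abs_max_sub_max_le_max _ _ _ _
  have h2 : |min R t - min R u| ≤ max |R - R| |t - u| := abs_min_sub_min_le_max _ _ _ _
  simp only [sub_self, abs_zero, abs_neg] at h1 h2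
  calc |clamp R t - clamp R u| ≤ max 0 |min R t - min R u| := h1
    _ = |min R t - min R u| := max_eq_right (abs_nonneg _)
    _ ≤ max 0 |t - u| := h2
    _ = |t - u| := max_eq_right (abs_nonneg _)

lemma sqrt_sub_sqrt_le {m u v : ℝ} (hm : 0 < m) (hu : m ≤ u) (hv : m ≤ v) :
    |Real.sqrt u - Real.sqrt v| ≤ |u - v| / (2 * Real.sqrt m) := by
  have hsm : 0 < Real.sqrt m := Real.sqrt_pos.2 hm
  have h0m : (0:ℝ) ≤ m := hm.le
  have key : ∀ p q : ℝ, m ≤ p → m ≤ q → q ≤ p →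
      Real.sqrt p - Real.sqrt q ≤ (p - q) / (2 * Real.sqrt m) := by
    intro p q hp hq hqp
    rw [div_eq_inv_mul, le_inv_mul_iff₀ (by positivity)]
    have e1 : Real.sqrt p ^ 2 = p := Real.sq_sqrt (h0m.trans hp)
    have e2 : Real.sqrt q ^ 2 = q := Real.sq_sqrt (h0m.trans hq)
    have l1 : Real.sqrt m ≤ Real.sqrt q := Real.sqrt_le_sqrt hq
    have l2 : Real.sqrt q ≤ Real.sqrt p := Real.sqrt_le_sqrt hqp
    nlinarith [Real.sqrt_nonneg p, Real.sqrt_nonneg q]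
  rcases le_total v u with h | h
  · rw [abs_of_nonneg (sub_nonneg.2 (Real.sqrt_le_sqrt h)),
      abs_of_nonneg (by linarith : (0:ℝ) ≤ u - v)]
    exact key u v hu hv h
  · rw [abs_of_nonpos (sub_nonpos.2 (Real.sqrt_le_sqrt h)),
      abs_of_nonpos (by linarith : u - v ≤ (0:ℝ)), neg_sub, neg_sub]
    exact key v u hv hu h

noncomputable def sgn {N : ℕ} (i : ZMod N) : ℝ := if i = 0 then 1 else -1

lemma abs_sgn {N : ℕ} (i : ZMod N) : |sgn i| = 1 := by
  unfold sgn; split <;> norm_num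

lemma sq_sgn {N : ℕ} (i : ZMod N) : sgn i ^ 2 = 1 := by
  unfold sgn; split <;> norm_num

noncomputable def T (a b R : ℝ) {N : ℕ} [NeZero N] (x : ZMod N → ℝ) : ZMod N → ℝ :=
  fun i => sgn i * Real.sqrt (a - clamp R (x (i + 1)) - b * clamp R (x (i - 1)))

variable {a b : ℝ}

lemma key (hb : 0 < b) (ha : 8 * (1 + b) ^ 2 < a) (N : ℕ) (hN : 2 ≤ N) :
    ∃ X : ℕ → ℝ,
      (∀ k, X (k + 2) = a - X (k + 1) ^ 2 - b * X k) ∧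
      (∀ k, X (k + N) = X k) ∧
      (∀ k, N ∣ k → 0 < X k) ∧
      (∀ k, ¬ N ∣ k → X k < 0) := by
  haveI : NeZero N := ⟨by omega⟩
  have ha0 : 0 < a := by nlinarith
  set R := Real.sqrt (2 * a) with hRdef
  have hR0 : 0 ≤ R := Real.sqrt_nonneg _
  have hR2 : R ^ 2 = 2 * a := Real.sq_sqrt (by linarith)
  have hR4 : 4 * (1 + b) ≤ R := by nlinarith
  have hRpos : 0 < R := by nlinarith
  have harg : ∀ t u : ℝ, |t| ≤ R → |u| ≤ R →
      a / 2 ≤ a - t - b * u ∧ a - t - b * u ≤ 2 * a := by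
    intro t u ht hu
    rw [abs_le] at ht hu
    constructor <;> nlinarith [ht.1, ht.2, hu.1, hu.2]
  have hm : (0:ℝ) < a / 2 := by linarith
  have h2s : 2 * Real.sqrt (a / 2) = R := by
    rw [hRdef, show (2:ℝ) * a = 4 * (a / 2) by ring,
      show (4:ℝ) * (a / 2) = 2 ^ 2 * (a / 2) by norm_num,
      Real.sqrt_mul (by norm_num) (a / 2), Real.sqrt_sq (by norm_num : (0:ℝ) ≤ 2)]
  have hlip : LipschitzWith (1/2) (T a b R (N := N)) := by
    apply LipschitzWith.of_dist_le_mul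
    intro x y
    have hd0 : 0 ≤ dist x y := dist_nonneg
    have hhalf : ((1/2 : ℝ≥0) : ℝ) = 1/2 := by norm_num
    rw [hhalf]
    rw [dist_pi_le_iff (by positivity)]
    intro i
    set u := a - clamp R (x (i + 1)) - b * clamp R (x (i - 1)) with hu
    set v := a - clamp R (y (i + 1)) - b * clamp R (y (i - 1)) with hv
    have hub := harg _ _ (abs_clamp_le hR0 (x (i+1))) (abs_clamp_le hR0 (x (i-1)))
    have hvb := harg _ _ (abs_clamp_le hR0 (y (i+1))) (abs_clamp_le hR0 (y (i-1)))
    have h1 : dist (T a b R x i) (T a b R y i) = |Real.sqrt u - Real.sqrt v| := by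
      show dist (sgn i * Real.sqrt u) (sgn i * Real.sqrt v) = _
      rw [Real.dist_eq, ← mul_sub, abs_mul, abs_sgn, one_mul]
    rw [h1]
    have h2 : |Real.sqrt u - Real.sqrt v| ≤ |u - v| / (2 * Real.sqrt (a/2)) :=
      sqrt_sub_sqrt_le hm hub.1 hvb.1
    have h3 : |u - v| ≤ (1 + b) * dist x y := by
      have e : u - v = (clamp R (y (i+1)) - clamp R (x (i+1)))
          + b * (clamp R (y (i-1)) - clamp R (x (i-1))) := by rw [hu, hv]; ring
      rw [e]
      have c1 : |clamp R (y (i+1)) - clamp R (x (i+1))| ≤ dist x y := by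
        refine (abs_clamp_sub_clamp R _ _).trans ?_
        rw [← Real.dist_eq, dist_comm]
        exact dist_le_pi_dist x y (i+1)
      have c2 : |clamp R (y (i-1)) - clamp R (x (i-1))| ≤ dist x y := by
        refine (abs_clamp_sub_clamp R _ _).trans ?_
        rw [← Real.dist_eq, dist_comm]
        exact dist_le_pi_dist x y (i-1)
      calc |(clamp R (y (i+1)) - clamp R (x (i+1)))
          + b * (clamp R (y (i-1)) - clamp R (x (i-1)))|
          ≤ |clamp R (y (i+1)) - clamp R (x (i+1))|
            + |b * (clamp R (y (i-1)) - clamp R (x (i-1)))| := abs_add_le _ _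
        _ = |clamp R (y (i+1)) - clamp R (x (i+1))|
            + b * |clamp R (y (i-1)) - clamp R (x (i-1))| := by
              rw [abs_mul, abs_of_pos hb]
        _ ≤ (1 + b) * dist x y := by nlinarith
    rw [h2s] at h2
    refine h2.trans ?_
    rw [div_le_iff₀ hRpos]
    nlinarith [abs_nonneg (u - v)]
  have hcw : ContractingWith (1/2) (T a b R (N := N)) := ⟨by rw [← NNReal.coe_lt_coe]; norm_num, hlip⟩
  set x := hcw.fixedPoint (T a b R) with hxdef
  have hfix : T a b R x = x := hcw.fixedPoint_isFixedPt
  have hcoord : ∀ i : ZMod N,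
      x i = sgn i * Real.sqrt (a - clamp R (x (i+1)) - b * clamp R (x (i-1))) :=
    fun i => (congrFun hfix i).symm
  have hbox : ∀ i : ZMod N, |x i| ≤ R := by
    intro i
    have hub := harg _ _ (abs_clamp_le hR0 (x (i+1))) (abs_clamp_le hR0 (x (i-1)))
    rw [hcoord i, abs_mul, abs_sgn, one_mul,
      abs_of_nonneg (Real.sqrt_nonneg _), hRdef]
    exact Real.sqrt_le_sqrt hub.2
  have hclean : ∀ i : ZMod N,
      x i = sgn i * Real.sqrt (a - x (i+1) - b * x (i-1)) := by
    intro i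
    rw [hcoord i, clamp_eq (hbox (i+1)), clamp_eq (hbox (i-1))]
  have hargc : ∀ i : ZMod N, a / 2 ≤ a - x (i+1) - b * x (i-1) :=
    fun i => (harg _ _ (hbox (i+1)) (hbox (i-1))).1
  have hs2 : 0 < Real.sqrt (a / 2) := Real.sqrt_pos.2 hm
  have hsq : ∀ i : ZMod N, x i ^ 2 = a - x (i+1) - b * x (i-1) := by
    intro i
    rw [hclean i, mul_pow, sq_sgn, one_mul,
      Real.sq_sqrt (by linarith [hargc i])]
  have hsgnlow : ∀ i : ZMod N, Real.sqrt (a/2) ≤ Real.sqrt (a - x (i+1) - b * x (i-1)) :=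
    fun i => Real.sqrt_le_sqrt (hargc i)
  refine ⟨fun k => x (k : ZMod N), ?_, ?_, ?_, ?_⟩
  · intro k
    have h := hsq ((k+1 : ℕ) : ZMod N)
    have e1 : ((k+1 : ℕ) : ZMod N) + 1 = ((k+2 : ℕ) : ZMod N) := by push_cast; ring
    have e2 : ((k+1 : ℕ) : ZMod N) - 1 = ((k : ℕ) : ZMod N) := by push_cast; ring
    rw [e1, e2] at h
    linarith
  · intro k
    show x ((k + N : ℕ) : ZMod N) = x ((k : ℕ) : ZMod N)
    have : ((k + N : ℕ) : ZMod N) = ((k : ℕ) : ZMod N) := by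
      push_cast [ZMod.natCast_self]; ring
    rw [this]
  · intro k hk
    have h0 : ((k : ℕ) : ZMod N) = 0 := (ZMod.natCast_eq_zero_iff k N).2 hk
    show 0 < x ((k : ℕ) : ZMod N)
    rw [h0, hclean 0]
    have hsgn0 : sgn (0 : ZMod N) = 1 := if_pos rfl
    rw [hsgn0, one_mul]
    exact Real.sqrt_pos.2 (lt_of_lt_of_le hm (hargc 0))
  · intro k hk
    have h0 : ((k : ℕ) : ZMod N) ≠ 0 := fun h =>
      hk ((ZMod.natCast_eq_zero_iff k N).1 h)
    show x ((k : ℕ) : ZMod N) < 0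
    rw [hclean _]
    have hsgn0 : sgn ((k : ℕ) : ZMod N) = -1 := if_neg h0
    rw [hsgn0, neg_one_mul]
    exact neg_lt_zero.2 (Real.sqrt_pos.2 (lt_of_lt_of_le hm (hargc _)))

lemma iter_eq (X : ℕ → ℝ) (hX : ∀ k, X (k + 2) = a - X (k + 1) ^ 2 - b * X k) (k : ℕ) :
    (henon a b)^[k] (X 1, X 0) = (X (k + 1), X k) := by
  induction k with
  | zero => rfl
  | succ n ih =>
    rw [Function.iterate_succ_apply', ih]
    show (a - X (n+1) ^ 2 - b * X n, X (n+1)) = (X (n+2), X (n+1))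
    rw [hX n]

lemma infinite_periodic (hb : 0 < b) (ha : 8 * (1 + b) ^ 2 < a) :
    {z : ℝ × ℝ | ∃ n, 1 ≤ n ∧ (henon a b)^[n] z = z}.Infinite := by
  choose X hrec hper hpos hneg using fun n : ℕ => key hb ha (n + 2) (by omega)
  have hXall : ∀ n k, X n (k + (n+2)) = X n k := hper
  apply Set.infinite_of_injective_forall_mem (f := fun n : ℕ => (X n 1, X n 0))
  · intro n m hnm
    simp only [Prod.mk.injEq] at hnm
    -- all iterates agree, hence X n k = X m k for all k
    have hall : ∀ k, X n k = X m k := by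
      intro k
      have h1 := iter_eq (X n) (hrec n) k
      have h2 := iter_eq (X m) (hrec m) k
      rw [hnm.1, hnm.2] at h1
      rw [h1] at h2
      exact (Prod.ext_iff.1 h2).2
    have hd1 : (n + 2) ∣ (m + 2) := by
      by_contra hd
      have h1 : X n (m + 2) < 0 := hneg n (m + 2) hd
      have h2 : 0 < X m (m + 2) := hpos m (m + 2) dvd_rfl
      rw [hall (m + 2)] at h1
      linarith
    have hd2 : (m + 2) ∣ (n + 2) := by
      by_contra hd
      have h1 : X m (n + 2) < 0 := hneg m (n + 2) hd
      have h2 : 0 < X n (n + 2) := hpos n (n + 2) dvd_rfl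
      rw [hall (n + 2)] at h2
      linarith
    have := Nat.dvd_antisymm hd1 hd2
    omega
  · intro n
    refine ⟨n + 2, by omega, ?_⟩
    rw [iter_eq (X n) (hrec n) (n + 2)]
    have e1 : X n (n + 2 + 1) = X n 1 := by
      rw [show n + 2 + 1 = 1 + (n + 2) by ring, hXall n 1]
    have e2 : X n (n + 2) = X n 0 := by
      rw [show n + 2 = 0 + (n + 2) by ring, hXall n 0]
    rw [e1, e2]

end HenonAux

/-- For every `b > 0` there is `A ∈ ℝ` such that for all `a > A` the Hénon map `H_{a,b}`
has infinitely many periodic points in `ℝ²`. In particular, the set of parameters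
`(a, b)` with `b > 0` for which `H_{a,b}` has infinitely many periodic points contains a
nonempty open subset of the `(a, b)`-plane. -/
theorem henon_infinitely_many_periodic_points :
    (∀ b : ℝ, 0 < b → ∃ A : ℝ, ∀ a : ℝ, A < a →
      {z : ℝ × ℝ | ∃ n, 1 ≤ n ∧ (henon a b)^[n] z = z}.Infinite) ∧
    ∃ U : Set (ℝ × ℝ), IsOpen U ∧ U.Nonempty ∧
      U ⊆ {p : ℝ × ℝ | 0 < p.2 ∧
        {z : ℝ × ℝ | ∃ n, 1 ≤ n ∧ (henon p.1 p.2)^[n] z = z}.Infinite} := by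
  constructor
  · intro b hb
    exact ⟨8 * (1 + b) ^ 2, fun a ha => HenonAux.infinite_periodic hb ha⟩
  · refine ⟨{p : ℝ × ℝ | 0 < p.2} ∩ {p : ℝ × ℝ | 8 * (1 + p.2) ^ 2 < p.1},
      ?_, ⟨(33, 1), by norm_num⟩, ?_⟩
    · exact (isOpen_lt continuous_const continuous_snd).inter
        (isOpen_lt (by fun_prop) continuous_fst)
    · rintro ⟨pa, pb⟩ ⟨h1, h2⟩
      exact ⟨h1, HenonAux.infinite_periodic h1 h2⟩
end

section
/- Let b ≥ 2. For Lebesgue-almost every x ∈ [0, 1], the base-b digit sequence of x, defined by d_i(x) = ⌊b^{i+1}·x⌋ mod b for i ∈ ℕ, is simply normal in base b; that is, for every digit v ∈ {0, …, b−1}, the frequency (card {i < n : d_i(x) = v})/n tends to 1/b as n → ∞. -/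
open MeasureTheory ProbabilityTheory Filter Set
open scoped ENNReal Topology

namespace BorelNormalAux

/-- Counting lemma: split `range (a*c)` by quotient and remainder mod `c`. -/
lemma card_filter_div_mod (a c : ℕ) (hc : 0 < c) (P Q : ℕ → Prop)
    [DecidablePred P] [DecidablePred Q] :
    ((Finset.range (a * c)).filter fun m => P (m / c) ∧ Q (m % c)).card
      = ((Finset.range a).filter P).card * ((Finset.range c).filter Q).card := by
  rw [← Finset.card_product]
  apply Finset.card_nbij' (fun m => (m / c, m % c)) (fun p => p.1 * c + p.2)
  · intro m hm
    simp only [Finset.mem_coe, Finset.mem_filter, Finset.mem_range] at hm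
    simp only [Finset.mem_coe, Finset.mem_product, Finset.mem_filter, Finset.mem_range]
    exact ⟨⟨(Nat.div_lt_iff_lt_mul hc).2 (by omega), hm.2.1⟩, Nat.mod_lt _ hc, hm.2.2⟩
  · intro p hp
    simp only [Finset.mem_coe, Finset.mem_product, Finset.mem_filter, Finset.mem_range] at hp
    simp only [Finset.mem_coe, Finset.mem_filter, Finset.mem_range]
    have h1 : (p.1 * c + p.2) / c = p.1 := by
      rw [mul_comm, Nat.mul_add_div hc, Nat.div_eq_of_lt hp.2.1]; omega
    have h2 : (p.1 * c + p.2) % c = p.2 := by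
      rw [mul_comm, Nat.mul_add_mod, Nat.mod_eq_of_lt hp.2.1]
    refine ⟨?_, by rw [h1]; exact hp.1.2, by rw [h2]; exact hp.2.2⟩
    calc p.1 * c + p.2 < p.1 * c + c := by omega
      _ = (p.1 + 1) * c := by ring
      _ ≤ a * c := Nat.mul_le_mul_right c hp.1.1
  · intro m _
    exact Nat.div_add_mod' m c
  · intro p hp
    simp only [Finset.mem_coe, Finset.mem_product, Finset.mem_filter, Finset.mem_range] at hp
    have h1 : (p.1 * c + p.2) / c = p.1 := by
      rw [mul_comm, Nat.mul_add_div hc, Nat.div_eq_of_lt hp.2.1]; omega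
    have h2 : (p.1 * c + p.2) % c = p.2 := by
      rw [mul_comm, Nat.mul_add_mod, Nat.mod_eq_of_lt hp.2.1]
    simp [h1, h2]

lemma card_filter_mod {b : ℕ} (hb : 0 < b) (n v : ℕ) (hv : v < b) :
    ((Finset.range (b ^ n * b)).filter fun m => m % b = v).card = b ^ n := by
  have h := card_filter_div_mod (b ^ n) b hb (fun _ => True) (fun r => r = v)
  have h2 : ((Finset.range (b ^ n * b)).filter fun m => m % b = v)
      = ((Finset.range (b ^ n * b)).filter fun m => (fun _ => True) (m / b) ∧ m % b = v) := by
    simp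
  rw [h2, h, Finset.filter_true, Finset.card_range, Finset.filter_eq',
    if_pos (Finset.mem_range.2 hv)]
  simp

end BorelNormalAux

namespace BorelNormalAux2

lemma volume_floor_set (t : ℕ) (P : ℕ → Prop) [DecidablePred P] :
    volume {y : ℝ | y ∈ Ico (0:ℝ) t ∧ P ⌊y⌋₊}
      = (((Finset.range t).filter P).card : ℝ≥0∞) := by
  have hset : {y : ℝ | y ∈ Ico (0:ℝ) t ∧ P ⌊y⌋₊}
      = ⋃ m ∈ (Finset.range t).filter P, Ico (m : ℝ) (m + 1) := by
    ext y
    simp only [Set.mem_setOf_eq, Set.mem_Ico, Set.mem_iUnion, Finset.mem_filter,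
      Finset.mem_range, exists_prop]
    constructor
    · rintro ⟨⟨h0, ht⟩, hP⟩
      exact ⟨⌊y⌋₊, ⟨(Nat.floor_lt h0).2 ht, hP⟩, Nat.floor_le h0, Nat.lt_floor_add_one y⟩
    · rintro ⟨m, ⟨hm, hPm⟩, hy1, hy2⟩
      have h0 : (0:ℝ) ≤ y := le_trans (by positivity) hy1
      have hfl : ⌊y⌋₊ = m := by
        rw [Nat.floor_eq_iff h0]; exact ⟨hy1, hy2⟩
      refine ⟨⟨h0, ?_⟩, by rw [hfl]; exact hPm⟩
      calc y < m + 1 := hy2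
        _ ≤ t := by exact_mod_cast Nat.succ_le_of_lt hm
  rw [hset, measure_biUnion_finset ?_ (fun m _ => measurableSet_Ico)]
  · simp [Real.volume_Ico]
  · intro m hm n hn hmn
    have h : min (m+1) (n+1) ≤ max m n := by omega
    rw [Function.onFun, Set.Ico_disjoint_Ico]
    calc min ((m:ℝ)+1) ((n:ℝ)+1) = ((min (m+1) (n+1) : ℕ) : ℝ) := by push_cast; simp
      _ ≤ ((max m n : ℕ) : ℝ) := by exact_mod_cast h
      _ = max (m:ℝ) n := by push_cast; simp

lemma restrict_meas (t : ℕ) (ht : 0 < t) (P : ℕ → Prop) [DecidablePred P] :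
    volume.restrict (Ico (0:ℝ) 1) {x | P ⌊(t:ℝ) * x⌋₊}
      = (((Finset.range t).filter P).card : ℝ≥0∞) * ((t : ℝ≥0∞))⁻¹ := by
  have htR : (0:ℝ) < t := by exact_mod_cast ht
  have hmeas : MeasurableSet {x : ℝ | P ⌊(t:ℝ) * x⌋₊} := by
    have h1 : Measurable fun x : ℝ => ⌊(t:ℝ) * x⌋₊ :=
      Nat.measurable_floor.comp (measurable_const_mul _)
    exact h1 MeasurableSet.of_discrete
  rw [Measure.restrict_apply hmeas]
  have hset : {x : ℝ | P ⌊(t:ℝ)*x⌋₊} ∩ Ico 0 1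
      = (fun x => (t:ℝ) * x) ⁻¹' {y : ℝ | y ∈ Ico (0:ℝ) t ∧ P ⌊y⌋₊} := by
    ext x
    simp only [mem_inter_iff, mem_setOf_eq, mem_Ico, mem_preimage]
    constructor
    · rintro ⟨hP, h0, h1⟩
      exact ⟨⟨mul_nonneg htR.le h0, by nlinarith⟩, hP⟩
    · rintro ⟨⟨h0, h1⟩, hP⟩
      refine ⟨hP, nonneg_of_mul_nonneg_right h0 htR, ?_⟩
      nlinarith
  rw [hset, Real.volume_preimage_mul_left htR.ne', volume_floor_set, mul_comm]
  congr 1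
  rw [abs_of_nonneg (by positivity), ENNReal.ofReal_inv_of_pos htR, ENNReal.ofReal_natCast]

lemma ENN_cancel (N M : ℕ) (hN : N ≠ 0) :
    ((N : ℕ) : ℝ≥0∞) * (((N * M : ℕ)) : ℝ≥0∞)⁻¹ = ((M : ℕ) : ℝ≥0∞)⁻¹ := by
  have hN' : ((N:ℕ) : ℝ≥0∞) ≠ 0 := by exact_mod_cast hN
  push_cast
  rw [ENNReal.mul_inv (Or.inl hN') (Or.inl (ENNReal.natCast_ne_top N)), ← mul_assoc,
    ENNReal.mul_inv_cancel hN' (ENNReal.natCast_ne_top N), one_mul]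

end BorelNormalAux2

namespace BorelNormalAux3

lemma measurableSet_indicator_preimage {Ω : Type*} (A : Set Ω) (s : Set ℝ) :
    MeasurableSet[MeasurableSpace.generateFrom {A}] ((A.indicator fun _ => (1:ℝ)) ⁻¹' s) := by
  classical
  rw [Set.indicator_const_preimage_eq_union]
  have hA : MeasurableSet[MeasurableSpace.generateFrom {A}] A :=
    MeasurableSpace.measurableSet_generateFrom rfl
  refine MeasurableSet.union ?_ ?_ <;> split_ifs <;>
    first | exact hA | exact hA.compl | exact @MeasurableSet.empty _ (MeasurableSpace.generateFrom {A})

lemma indepSet_indepFun_indicator {Ω : Type*} {mΩ : MeasurableSpace Ω} {μ : Measure Ω}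
    {A B : Set Ω} (h : IndepSet A B μ) :
    IndepFun (A.indicator fun _ => (1:ℝ)) (B.indicator fun _ => (1:ℝ)) μ := by
  rw [IndepSet_iff_Indep, Indep_iff] at h
  rw [indepFun_iff_measure_inter_preimage_eq_mul]
  intro s t _ _
  exact h _ _ (measurableSet_indicator_preimage A s) (measurableSet_indicator_preimage B t)

end BorelNormalAux3

open BorelNormalAux BorelNormalAux2 BorelNormalAux3

/-- For every base `b ≥ 2`, Lebesgue-almost every `x ∈ [0, 1]` has a simply normal base-`b`
digit sequence `d_i(x) = ⌊b^(i+1)·x⌋ mod b`: every digit `v < b` occurs with asymptotic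
frequency `1/b`. -/
theorem ae_simply_normal (b : ℕ) (hb : 2 ≤ b) :
    ∀ᵐ x ∂(MeasureTheory.volume.restrict (Set.Icc (0 : ℝ) 1)),
      ∀ v : ℕ, v < b →
        Filter.Tendsto
          (fun n => (((Finset.range n).filter
              fun i => ⌊(b : ℝ) ^ (i + 1) * x⌋ % (b : ℤ) = (v : ℤ)).card : ℝ) / (n : ℝ))
          Filter.atTop (nhds (1 / (b : ℝ))) := by
  classical
  have hb0 : 0 < b := by omega
  have hb0' : ((b : ℕ) : ℝ≥0∞) ≠ 0 := by exact_mod_cast hb0.ne'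
  set μ := volume.restrict (Set.Ico (0:ℝ) 1) with hμ
  haveI hprob : IsProbabilityMeasure μ := ⟨by
    rw [hμ, Measure.restrict_apply_univ, Real.volume_Ico]; simp⟩
  set A : ℕ → ℕ → Set ℝ := fun v i => {x : ℝ | ⌊(b:ℝ)^(i+1) * x⌋₊ % b = v} with hA
  have hcast : ∀ k : ℕ, ((b ^ k : ℕ) : ℝ) = (b:ℝ) ^ k := by intro k; push_cast; ring
  have hA_meas : ∀ v i, MeasurableSet (A v i) := by
    intro v i
    have h1 : Measurable fun x : ℝ => ⌊(b:ℝ)^(i+1) * x⌋₊ :=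
      Nat.measurable_floor.comp (measurable_const_mul _)
    exact h1 (MeasurableSet.of_discrete : MeasurableSet {m : ℕ | m % b = v})
  have hA_single : ∀ v, v < b → ∀ i, μ (A v i) = ((b : ℕ) : ℝ≥0∞)⁻¹ := by
    intro v hv i
    have h1 : A v i = {x : ℝ | (fun m => m % b = v) ⌊((b^(i+1) : ℕ) : ℝ) * x⌋₊} := by
      rw [hA]; simp only [hcast]
    have hm := restrict_meas (b^(i+1)) (pow_pos hb0 _) (fun m => m % b = v)
    rw [h1, hμ, hm,
      show b ^ (i+1) = b ^ i * b from pow_succ b i, card_filter_mod hb0 i v hv]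
    exact ENN_cancel (b^i) b (pow_ne_zero i hb0.ne')
  have hA_pair : ∀ v, v < b → ∀ i k, μ (A v i ∩ A v (i+k+1))
      = ((b : ℕ) : ℝ≥0∞)⁻¹ * ((b : ℕ) : ℝ≥0∞)⁻¹ := by
    intro v hv i k
    have hfloor : ∀ x : ℝ, ⌊(b:ℝ)^(i+1) * x⌋₊ = ⌊(b:ℝ)^(i+k+1+1) * x⌋₊ / b^(k+1) := by
      intro x
      rw [← Nat.floor_div_natCast ((b:ℝ)^(i+k+1+1) * x) (b^(k+1))]
      congr 1
      rw [eq_div_iff (by exact_mod_cast (pow_pos hb0 (k+1)).ne')]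
      rw [hcast, show i+k+1+1 = (i+1)+(k+1) from by omega, pow_add]; ring
    have h1 : A v i ∩ A v (i+k+1)
        = {x : ℝ | (fun m => (m / b^(k+1)) % b = v ∧ m % b = v)
            ⌊((b^(i+k+1+1) : ℕ) : ℝ) * x⌋₊} := by
      ext x
      simp only [hA, Set.mem_inter_iff, Set.mem_setOf_eq, hcast, hfloor x]
    have hm := restrict_meas (b^(i+k+1+1)) (pow_pos hb0 _)
      (fun m => (m / b^(k+1)) % b = v ∧ m % b = v)
    rw [h1, hμ, hm]
    have hcount : ((Finset.range (b^(i+k+1+1))).filter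
        fun m => (m / b^(k+1)) % b = v ∧ m % b = v).card = b^i * b^k := by
      have hpred : ∀ m ∈ Finset.range (b^(i+k+1+1)),
          ((m / b^(k+1)) % b = v ∧ m % b = v)
          ↔ ((fun q => q % b = v) (m / b^(k+1)) ∧ (fun r => r % b = v) (m % b^(k+1))) := by
        intro m _
        have hmm := Nat.mod_mod_of_dvd m (dvd_pow_self b (show k+1 ≠ 0 by omega))
        simp only [hmm]
      have hc := card_filter_div_mod (b^(i+1)) (b^(k+1)) (pow_pos hb0 _)
        (fun q => q % b = v) (fun r => r % b = v)
      rw [Finset.filter_congr hpred,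
        show b^(i+k+1+1) = b^(i+1) * b^(k+1) from by rw [← pow_add]; congr 1; omega,
        hc, show b^(i+1) = b^i*b from pow_succ b i, show b^(k+1) = b^k*b from pow_succ b k,
        card_filter_mod hb0 i v hv, card_filter_mod hb0 k v hv]
    rw [hcount, show b^(i+k+1+1) = (b^i*b^k) * (b*b) from by ring,
      ENN_cancel _ _ (by positivity)]
    push_cast
    rw [ENNReal.mul_inv (Or.inl hb0') (Or.inl (ENNReal.natCast_ne_top b))]
  set X : ℕ → ℕ → ℝ → ℝ := fun v i => (A v i).indicator (fun _ => (1:ℝ)) with hX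
  have hX_meas : ∀ v i, Measurable (X v i) := fun v i =>
    measurable_const.indicator (hA_meas v i)
  have hindep : ∀ v, v < b → Pairwise (Function.onFun (IndepFun · · μ) (X v)) := by
    intro v hv
    have key : ∀ i k : ℕ, IndepFun (X v i) (X v (i+k+1)) μ := by
      intro i k
      apply indepSet_indepFun_indicator
      rw [indepSet_iff_measure_inter_eq_mul (hA_meas v i) (hA_meas v _) μ,
        hA_pair v hv i k, hA_single v hv, hA_single v hv]
    intro i j hij
    rcases Nat.lt_or_ge i j with h | h
    · obtain ⟨k, rfl⟩ : ∃ k, j = i + k + 1 := ⟨j - i - 1, by omega⟩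
      exact key i k
    · have h' : j < i := by omega
      obtain ⟨k, rfl⟩ : ∃ k, i = j + k + 1 := ⟨i - j - 1, by omega⟩
      exact (key j k).symm
  have hident : ∀ v, v < b → ∀ i, IdentDistrib (X v i) (X v 0) μ μ := by
    intro v hv i
    refine ⟨(hX_meas v i).aemeasurable, (hX_meas v 0).aemeasurable, ?_⟩
    ext s hs
    rw [Measure.map_apply (hX_meas v i) hs, Measure.map_apply (hX_meas v 0) hs]
    simp only [hX]
    rw [Set.indicator_const_preimage_eq_union, Set.indicator_const_preimage_eq_union]
    have hcompl : ∀ j : ℕ, μ (A v j)ᶜ = 1 - ((b : ℕ) : ℝ≥0∞)⁻¹ := by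
      intro j
      rw [measure_compl (hA_meas v j) (measure_ne_top μ _), hA_single v hv j, measure_univ]
    by_cases h1 : (1:ℝ) ∈ s <;> by_cases h0 : (0:ℝ) ∈ s <;>
      simp [h1, h0, hA_single v hv, hcompl, Set.union_compl_self]
  have hint : ∀ v, v < b → Integrable (X v 0) μ := fun v hv =>
    (integrable_const 1).indicator (hA_meas v 0)
  have hSLLN : ∀ v, v < b → ∀ᵐ x ∂μ, Tendsto
      (fun n : ℕ => (∑ i ∈ Finset.range n, X v i x) / n) atTop (𝓝 (1 / (b:ℝ))) := by
    intro v hv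
    have h := strong_law_ae_real (X v) (hint v hv) (hindep v hv) (hident v hv)
    have hE : (μ[X v 0]) = 1 / (b:ℝ) := by
      simp only [hX]
      rw [integral_indicator_const (1:ℝ) (hA_meas v 0), Measure.real, hA_single v hv 0]
      rw [ENNReal.toReal_inv]
      simp [one_div]
    rwa [hE] at h
  rw [show volume.restrict (Set.Icc (0:ℝ) 1) = μ from
    (Measure.restrict_congr_set Ico_ae_eq_Icc).symm, ae_all_iff]
  intro v
  by_cases hv : v < b
  · filter_upwards [hSLLN v hv, ae_restrict_mem measurableSet_Ico] with x hx hxI _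
    have hmem : ∀ i : ℕ, (x ∈ A v i) ↔ (⌊(b:ℝ)^(i+1) * x⌋ % (b:ℤ) = (v:ℤ)) := by
      intro i
      have hx0 : (0:ℝ) ≤ (b:ℝ)^(i+1) * x := mul_nonneg (by positivity) hxI.1
      simp only [hA, Set.mem_setOf_eq]
      rw [← Int.natCast_floor_eq_floor hx0, ← Int.natCast_mod]
      exact (Nat.cast_inj (R := ℤ)).symm
    have hsum : ∀ n : ℕ, (∑ i ∈ Finset.range n, X v i x)
        = (((Finset.range n).filter
            fun i => ⌊(b:ℝ)^(i+1) * x⌋ % (b:ℤ) = (v:ℤ)).card : ℝ) := by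
      intro n
      simp only [hX, Set.indicator_apply]
      rw [Finset.sum_boole]
      congr 1
      have hfc := Finset.filter_congr (s := Finset.range n)
        (p := fun i => x ∈ A v i)
        (q := fun i => ⌊(b:ℝ)^(i+1) * x⌋ % (b:ℤ) = (v:ℤ))
        (fun i _ => hmem i)
      rw [hfc]
    exact hx.congr fun n => by rw [hsum n]
  · filter_upwards with x hvb
    exact absurd hvb hv
end
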